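/- Let n ≥ 1, let I be an ideal of the polynomial ring ℝ[x₁, …, xₙ], let A = ℝ[x₁, …, xₙ]/I, and let Z(I) = {x ∈ ℝⁿ : f(x) = 0 for all f ∈ I}. Then every maximal ideal of A that is a real ideal is of the form m_x = {f ∈ A : f(x) = 0} for some point x ∈ Z(I). -/

import Mathlib

/-!
Pull `m` back to a maximal ideal `M` of `ℝ[x₁, …, xₙ]`. By Zariski's lemma the residue field is
finite over `ℝ`, so it embeds into `ℂ`; realness of `M` forbids a square root of `-1` in it, so the
embedding lands in `ℝ`, and the images of the variables are the coordinates of the point `x`.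
-/

/-- An ideal `I` of a commutative ring is *real* if whenever a sum of squares
`a 0 ^ 2 + ⋯ + a (n-1) ^ 2` belongs to `I`, each `a i` belongs to `I`. -/
def IsRealIdeal {A : Type*} [CommRing A] (I : Ideal A) : Prop :=
  ∀ (n : ℕ) (a : Fin n → A), (∑ i, a i ^ 2) ∈ I → ∀ i, a i ∈ I

theorem IsRealIdeal.comap {A B : Type*} [CommRing A] [CommRing B] (f : A →+* B) {J : Ideal B}
    (hJ : IsRealIdeal J) : IsRealIdeal (J.comap f) := fun k a ha ↦
  hJ k (f ∘ a) (by simpa only [Ideal.mem_comap, map_sum, map_pow, Function.comp_apply] using ha)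

theorem IsRealIdeal.not_isSquare_neg_one {A : Type*} [CommRing A] {I : Ideal A}
    (hI : IsRealIdeal I) (hne : I ≠ ⊤) : ¬IsSquare (-1 : A ⧸ I) := by
  rintro ⟨β, hβ⟩
  obtain ⟨c, rfl⟩ := Ideal.Quotient.mk_surjective β
  have hsum : (∑ i, ![c, 1] i ^ 2) ∈ I := by
    rw [← Ideal.Quotient.eq_zero_iff_mem]
    simp [Fin.sum_univ_two, sq, ← hβ]
  exact hne ((Ideal.eq_top_iff_one I).mpr (by simpa using hI 2 _ hsum 1))

theorem AlgHom.mem_range_ofRealAm_of_not_isSquare_neg_one {F : Type*} [Field F] [Algebra ℝ F]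
    (hF : ¬IsSquare (-1 : F)) (φ : F →ₐ[ℝ] ℂ) (α : F) : φ α ∈ Complex.ofRealAm.range := by
  by_contra hα
  have hb : (φ α).im ≠ 0 := fun hb ↦ hα ⟨(φ α).re, Complex.ext (by simp) (by simp [hb])⟩
  set β : F := (algebraMap ℝ F (φ α).im)⁻¹ * (α - algebraMap ℝ F (φ α).re)
  have hφβ : φ β = Complex.I := by
    rw [map_mul, map_inv₀, map_sub, φ.commutes, φ.commutes,
      inv_mul_eq_iff_eq_mul₀ (by simpa using hb)]
    apply Complex.ext <;> simp
  exact hF ⟨β, φ.injective (by simp [hφβ])⟩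

theorem nonempty_algHom_real_of_not_isSquare_neg_one (F : Type*) [Field F] [Algebra ℝ F]
    [Algebra.IsAlgebraic ℝ F] (hF : ¬IsSquare (-1 : F)) : Nonempty (F →ₐ[ℝ] ℝ) :=
  ⟨(AlgEquiv.ofInjective _ Complex.ofReal_injective).symm.toAlgHom.comp
    ((IsAlgClosed.lift (M := ℂ)).codRestrict _
      (AlgHom.mem_range_ofRealAm_of_not_isSquare_neg_one hF _))⟩

theorem MvPolynomial.exists_mem_iff_eval_eq_zero_of_not_isSquare_neg_one {σ : Type*} [Finite σ]
    (M : Ideal (MvPolynomial σ ℝ)) [M.IsMaximal]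
    (hM : ¬IsSquare (-1 : MvPolynomial σ ℝ ⧸ M)) :
    ∃ x : σ → ℝ, ∀ f, f ∈ M ↔ eval x f = 0 := by
  let := Ideal.Quotient.field M
  have := finite_of_finite_type_of_isJacobsonRing ℝ (MvPolynomial σ ℝ ⧸ M)
  obtain ⟨ψ⟩ := nonempty_algHom_real_of_not_isSquare_neg_one _ hM
  set x : σ → ℝ := fun i ↦ ψ (Ideal.Quotient.mk M (X i))
  have hψ : ψ.comp (Ideal.Quotient.mkₐ ℝ M) = aeval x := algHom_ext fun i ↦ by simp [x]
  refine ⟨x, fun f ↦ ?_⟩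
  rw [← Ideal.Quotient.eq_zero_iff_mem, ← map_eq_zero_iff ψ ψ.injective, ← coe_aeval_eq_eval,
    ← hψ]
  rfl

theorem real_maximal_ideal_eq_point_general {n : ℕ}
    (I : Ideal (MvPolynomial (Fin n) ℝ))
    (m : Ideal (MvPolynomial (Fin n) ℝ ⧸ I)) (hm : m.IsMaximal) (hr : IsRealIdeal m) :
    ∃ x : Fin n → ℝ, (∀ f ∈ I, MvPolynomial.eval x f = 0) ∧
      ∀ f : MvPolynomial (Fin n) ℝ, Ideal.Quotient.mk I f ∈ m ↔ MvPolynomial.eval x f = 0 := by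
  set M := m.comap (Ideal.Quotient.mk I)
  have hM : M.IsMaximal := Ideal.comap_isMaximal_of_surjective _ Ideal.Quotient.mk_surjective
  obtain ⟨x, hx⟩ := MvPolynomial.exists_mem_iff_eval_eq_zero_of_not_isSquare_neg_one M
    ((hr.comap _).not_isSquare_neg_one hM.ne_top)
  refine ⟨x, fun f hf ↦ (hx f).1 ?_, hx⟩
  simp [M, Ideal.Quotient.eq_zero_iff_mem.mpr hf]

/-- Let `A = ℝ[x₁,…,xₙ]/I`. Every maximal ideal of `A` which is a real
ideal is the ideal `m_x` of functions vanishing at some point `x` of the real zero set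
`Z(I) ⊆ ℝⁿ`. -/
theorem real_maximal_ideal_eq_point {n : ℕ} (hn : 1 ≤ n)
    (I : Ideal (MvPolynomial (Fin n) ℝ))
    (m : Ideal (MvPolynomial (Fin n) ℝ ⧸ I)) (hm : m.IsMaximal) (hr : IsRealIdeal m) :
    ∃ x : Fin n → ℝ, (∀ f ∈ I, MvPolynomial.eval x f = 0) ∧
      ∀ f : MvPolynomial (Fin n) ℝ, Ideal.Quotient.mk I f ∈ m ↔ MvPolynomial.eval x f = 0 :=
  real_maximal_ideal_eq_point_general I m hm hr
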